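/- For a Weyl group W with parabolic subgroup W_P and u, w ∈ W, the following are equivalent: (1) u ≤_P w; (2) uv ≤_P wv for every v ∈ W_P; (3) uv ≤ wv in Bruhat order for some v ∈ W_P such that wv ∈ W^P. -/

import Mathlib

/-!
STATEMENT 2: For a Weyl group `W` with parabolic subgroup `W_P` and `u, w ∈ W`, the
following are equivalent: (1) `u ≤_P w`; (2) `u*v ≤_P w*v` for every `v ∈ W_P`;
(3) `u*v ≤ w*v` in the Bruhat order for some `v ∈ W_P` with `w*v ∈ W^P`.
-/

open CoxeterSystem

variable {B W : Type*} [Group W]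

/-- The parabolic subgroup `W_P` generated by the simple reflections indexed by `J`. -/
def parabolicSubgroup {M : CoxeterMatrix B} (cs : CoxeterSystem M W) (J : Set B) : Subgroup W :=
  Subgroup.closure (cs.simple '' J)

/-- One step of the extended `P`-Bruhat order: right multiplication by a reflection `s_α`
with `α ∈ R⁺ \ R_P⁺` (i.e. a reflection of `W` not lying in `W_P`) that increases length. -/
def extPStep {M : CoxeterMatrix B} (cs : CoxeterSystem M W) (J : Set B) (u w : W) : Prop :=
  ∃ t : W, cs.IsReflection t ∧ t ∉ parabolicSubgroup cs J ∧ w = u * t ∧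
    cs.length u < cs.length w

/-- The extended `P`-Bruhat order `≤_P`. -/
def extPLE {M : CoxeterMatrix B} (cs : CoxeterSystem M W) (J : Set B) : W → W → Prop :=
  Relation.ReflTransGen (extPStep cs J)

/-- The ordinary Bruhat order on `W`. -/
def bruhatLE {M : CoxeterMatrix B} (cs : CoxeterSystem M W) : W → W → Prop :=
  Relation.ReflTransGen
    (fun u w => ∃ t : W, cs.IsReflection t ∧ w = u * t ∧ cs.length u < cs.length w)

/-- `w` is a minimal-length representative of its coset `w * W_P`, i.e. `w ∈ W^P`. -/
def isMinimalRep {M : CoxeterMatrix B} (cs : CoxeterSystem M W) (J : Set B) (w : W) : Prop :=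
  ∀ v ∈ parabolicSubgroup cs J, cs.length w ≤ cs.length (w * v)

/-!
Right multiplication by `s j` with `j ∈ J` sends a reflection `t ∉ W_P` to `s j * t * s j ∉ W_P`,
and it preserves the direction of the step `u → u * t`: by Tits' cocycle, the parity of `t` as a
right inversion of `u` equals that of `s j * t * s j` for `u * s j`, because `s j * t * s j ≠ s j`.
So `≤_P` is invariant under right multiplication by `W_P`, which gives (1) ⇔ (2) and (1) ⇒ (3).

For (3) ⇒ (1), let `z ∈ W^P` and `x < z` in the Bruhat order. Induction on `ℓ z`, along a left
descent `s` of `z` and using the lifting property of the Bruhat order, yields a covering step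
`x → x * t ≤ z` with `t ∉ W_P`. At the bottom of the induction `x = s z` and `t = z⁻¹ s z`; then
`t ∈ W_P` would contradict the minimality of `z`.
-/

theorem mul_mul_inv_eq_iff {G : Type*} [Group G] (x t c : G) :
    x * t * x⁻¹ = c ↔ t = x⁻¹ * c * x := by
  constructor <;> rintro rfl <;> group

section

variable {M : CoxeterMatrix B} (cs : CoxeterSystem M W)

local prefix:100 "s" => cs.simple
local prefix:100 "π" => cs.wordProd
local prefix:100 "ℓ" => cs.length
local prefix:100 "ris" => cs.rightInvSeq

namespace CoxeterSystem

section ReflectionCocycle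

open scoped Classical

theorem simple_mul_mul_simple_eq_iff (i : B) (t c : W) :
    s i * t * s i = c ↔ t = s i * c * s i := by
  simpa using mul_mul_inv_eq_iff (s i) t c

noncomputable def simpleToggle (i : B) : Equiv.Perm (W × ZMod 2) :=
  Function.Involutive.toPerm (fun p => (s i * p.1 * s i, p.2 + if p.1 = s i then 1 else 0)) <| by
    rintro ⟨t, e⟩
    simp only [simple_mul_mul_simple_eq_iff,
      cs.simple_mul_simple_cancel_right, Prod.mk.injEq, true_and]
    split_ifs <;> simp [add_assoc, CharTwo.add_self_eq_zero]

theorem simpleToggle_apply (i : B) (t : W) (e : ZMod 2) :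
    simpleToggle cs i (t, e) = (s i * t * s i, e + if t = s i then 1 else 0) := rfl

theorem simpleToggle_mul_pow_apply (i i' : B) (n : ℕ) (t : W) (e : ZMod 2) :
    ((simpleToggle cs i * simpleToggle cs i') ^ n) (t, e) =
      ((s i * s i') ^ n * t * ((s i * s i') ^ n)⁻¹,
        e + ∑ a ∈ Finset.range (2 * n), if t = (s i' * s i) ^ a * s i' then 1 else 0) := by
  have hinv : (s i * s i')⁻¹ = s i' * s i := by simp
  have hsemi (n : ℕ) : s i' * (s i * s i') ^ n = (s i' * s i) ^ n * s i' :=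
    (SemiconjBy.pow_right (by simp [SemiconjBy, mul_assoc]) n).eq
  induction n with
  | zero => simp
  | succ n ih =>
    set X := (s i * s i') ^ n * t * ((s i * s i') ^ n)⁻¹
    have hX (c : W) : X = c ↔ t = (s i' * s i) ^ n * c * (s i * s i') ^ n := by
      rw [← hinv, inv_pow]
      exact mul_mul_inv_eq_iff _ t c
    have h₁ : X = s i' ↔ t = (s i' * s i) ^ (2 * n) * s i' := by
      rw [hX, mul_assoc, hsemi, ← mul_assoc, ← pow_add, two_mul]
    have h₂ : s i' * X * s i' = s i ↔ t = (s i' * s i) ^ (2 * n + 1) * s i' := by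
      rw [simple_mul_mul_simple_eq_iff, hX, mul_assoc _ _ ((s i * s i') ^ n),
        mul_assoc (s i' * s i), hsemi, ← mul_assoc, ← mul_assoc, ← pow_succ, ← pow_add]
      ring_nf
    rw [pow_succ', Equiv.Perm.mul_apply, ih, Equiv.Perm.mul_apply, simpleToggle_apply,
      simpleToggle_apply, h₁, h₂, Nat.mul_succ, Finset.sum_range_succ, Finset.sum_range_succ,
      Prod.mk.injEq]
    refine ⟨?_, by ring⟩
    calc s i * (s i' * X * s i') * s i = s i * s i' * X * (s i * s i')⁻¹ := by
          rw [hinv]; group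
      _ = _ := by simp only [X, pow_succ', mul_inv_rev, mul_assoc]

theorem isLiftable_simpleToggle : M.IsLiftable (simpleToggle cs) := by
  intro i i'
  ext ⟨t, e⟩ : 1
  rw [simpleToggle_mul_pow_apply, cs.simple_mul_simple_pow, one_mul, inv_one, mul_one,
    two_mul, Finset.sum_range_add]
  simp only [pow_add, cs.simple_mul_simple_pow', one_mul, CharTwo.add_self_eq_zero, add_zero]
  rfl

/-- Tits' action of `W` on `W × ZMod 2`: for a word of `w`, the second component of
`w • (t, 0)` is the parity of the number of occurrences of `t` in its right inversion sequence,
which is therefore independent of the word. -/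
noncomputable def reflectionCocycle : W →* Equiv.Perm (W × ZMod 2) :=
  cs.lift ⟨simpleToggle cs, isLiftable_simpleToggle cs⟩

theorem reflectionCocycle_simple (i : B) : reflectionCocycle cs (s i) = simpleToggle cs i :=
  cs.lift_apply_simple (isLiftable_simpleToggle cs) i

theorem reflectionCocycle_wordProd (ω : List B) (t : W) (e : ZMod 2) :
    reflectionCocycle cs (π ω) (t, e) =
      (π ω * t * (π ω)⁻¹, e + ((ris ω).count t : ZMod 2)) := by
  induction ω generalizing t e with
  | nil => simp
  | cons i ω ih =>
    rw [cs.wordProd_cons, map_mul, Equiv.Perm.mul_apply, ih, reflectionCocycle_simple,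
      simpleToggle_apply, mul_mul_inv_eq_iff, rightInvSeq, List.count_cons, Prod.mk.injEq]
    refine ⟨by simp [mul_assoc], ?_⟩
    simp only [beq_iff_eq, eq_comm (a := t)]
    split_ifs <;> simp [add_assoc]

noncomputable def inversionParity (w t : W) : ZMod 2 := (reflectionCocycle cs w (t, 0)).2

theorem inversionParity_wordProd (ω : List B) (t : W) :
    inversionParity cs (π ω) t = (ris ω).count t := by
  simp [inversionParity, reflectionCocycle_wordProd]

theorem inversionParity_one (t : W) : inversionParity cs 1 t = 0 := by
  simpa using inversionParity_wordProd cs [] t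

theorem reflectionCocycle_apply (w t : W) (e : ZMod 2) :
    reflectionCocycle cs w (t, e) = (w * t * w⁻¹, e + inversionParity cs w t) := by
  obtain ⟨ω, rfl⟩ := cs.wordProd_surjective w
  rw [reflectionCocycle_wordProd, inversionParity_wordProd]

theorem inversionParity_mul (w₁ w₂ t : W) :
    inversionParity cs (w₁ * w₂) t =
      inversionParity cs w₂ t + inversionParity cs w₁ (w₂ * t * w₂⁻¹) := by
  have h : reflectionCocycle cs (w₁ * w₂) (t, 0) =
      reflectionCocycle cs w₁ (reflectionCocycle cs w₂ (t, 0)) := by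
    rw [map_mul, Equiv.Perm.mul_apply]
  rw [reflectionCocycle_apply, reflectionCocycle_apply, reflectionCocycle_apply] at h
  simpa using (congrArg Prod.snd h)

theorem inversionParity_simple (i : B) (t : W) :
    inversionParity cs (s i) t = if t = s i then 1 else 0 := by
  simp [inversionParity, reflectionCocycle_simple, simpleToggle_apply]

theorem inversionParity_self {t : W} (ht : cs.IsReflection t) : inversionParity cs t t = 1 := by
  obtain ⟨w, i, rfl⟩ := ht
  have h₁ := inversionParity_mul cs w⁻¹ w (s i)
  have h₂ := inversionParity_mul cs (w * s i) w⁻¹ (w * s i * w⁻¹)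
  have h₃ := inversionParity_mul cs w (s i) (s i)
  rw [inv_mul_cancel, inversionParity_one] at h₁
  rw [show w⁻¹ * (w * s i * w⁻¹) * w⁻¹⁻¹ = s i by group] at h₂
  rw [inversionParity_simple, if_pos rfl, cs.simple_mul_simple_self, one_mul, cs.inv_simple] at h₃
  linear_combination h₂ + h₃ - h₁

theorem mem_rightInvSeq_of_inversionParity_eq_one {ω : List B} {t : W}
    (h : inversionParity cs (π ω) t = 1) : t ∈ ris ω := by
  by_contra hmem
  rw [inversionParity_wordProd, List.count_eq_zero_of_not_mem hmem] at h
  simp at h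

theorem length_mul_lt_of_inversionParity_eq_one {w t : W} (h : inversionParity cs w t = 1) :
    ℓ (w * t) < ℓ w := by
  obtain ⟨ω, hω, rfl⟩ := cs.exists_isReduced w
  exact (cs.isRightInversion_of_mem_rightInvSeq hω
    (mem_rightInvSeq_of_inversionParity_eq_one cs h)).2

theorem inversionParity_eq_one_iff {w t : W} (ht : cs.IsReflection t) :
    inversionParity cs w t = 1 ↔ ℓ (w * t) < ℓ w := by
  refine ⟨length_mul_lt_of_inversionParity_eq_one cs, fun hlt => ?_⟩
  by_contra h
  have h₀ : inversionParity cs w t = 0 := by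
    revert h
    generalize inversionParity cs w t = e
    decide +revert
  have h₁ : inversionParity cs (w * t) t = 1 := by
    rw [inversionParity_mul, inversionParity_self cs ht, ht.mul_self, one_mul, ht.inv, h₀,
      add_zero]
  have h₂ := length_mul_lt_of_inversionParity_eq_one cs h₁
  rw [mul_assoc, ht.mul_self, mul_one] at h₂
  omega

theorem inversionParity_eq_zero_iff {w t : W} (ht : cs.IsReflection t) :
    inversionParity cs w t = 0 ↔ ℓ w < ℓ (w * t) := by
  have h01 : ∀ e : ZMod 2, e = 0 ↔ e ≠ 1 := by decide
  rw [h01, Ne, inversionParity_eq_one_iff cs ht, not_lt]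
  exact (ht.length_mul_left_ne w).symm.le_iff_lt

/-- The strong exchange condition. -/
theorem mem_rightInvSeq_of_length_mul_lt {ω : List B} {t : W} (ht : cs.IsReflection t)
    (h : ℓ (π ω * t) < ℓ (π ω)) : t ∈ ris ω :=
  mem_rightInvSeq_of_inversionParity_eq_one cs ((inversionParity_eq_one_iff cs ht).2 h)

end ReflectionCocycle

end CoxeterSystem

section BruhatOrder

variable {cs} {x y z : W} {i : B}

theorem bruhatLE_of_eq_mul {t : W} (ht : cs.IsReflection t) (hy : y = x * t) (hl : ℓ x < ℓ y) :
    bruhatLE cs x y :=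
  .single ⟨t, ht, hy, hl⟩

theorem bruhatLE.trans (hxy : bruhatLE cs x y) (hyz : bruhatLE cs y z) : bruhatLE cs x z :=
  Relation.ReflTransGen.trans hxy hyz

theorem bruhatLE.length_le (h : bruhatLE cs x y) : ℓ x ≤ ℓ y := by
  induction h with
  | refl => rfl
  | tail _ step ih =>
    obtain ⟨t, -, rfl, hl⟩ := step
    omega

theorem bruhatLE.length_lt_of_ne (h : bruhatLE cs x y) (hne : x ≠ y) : ℓ x < ℓ y := by
  rcases Relation.ReflTransGen.cases_tail h with rfl | ⟨c, hc, t, -, rfl, hl⟩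
  · exact absurd rfl hne
  · exact (bruhatLE.length_le hc).trans_lt hl

theorem bruhatLE.eq_of_length_le (h : bruhatLE cs x y) (hl : ℓ y ≤ ℓ x) : x = y := by
  by_contra hne
  have := h.length_lt_of_ne hne
  omega

theorem bruhatLE_simple_mul (hx : ¬cs.IsLeftDescent x i) : bruhatLE cs x (s i * x) := by
  rw [cs.not_isLeftDescent_iff] at hx
  exact bruhatLE_of_eq_mul (t := x⁻¹ * s i * x) ⟨x⁻¹, i, by simp⟩ (by group) (by omega)

theorem simple_mul_bruhatLE (hx : cs.IsLeftDescent x i) : bruhatLE cs (s i * x) x := by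
  simpa using bruhatLE_simple_mul (cs.isLeftDescent_iff_not_isLeftDescent_mul.1 hx)

theorem bruhatLE_simple_mul_mul {t : W} (ht : cs.IsReflection t)
    (hl : ℓ y < ℓ (y * t)) (hy : ¬cs.IsLeftDescent y i) :
    bruhatLE cs y (s i * (y * t)) := by
  obtain ⟨α, hα, hαt⟩ := cs.exists_isReduced (s i * (y * t))
  have hyt' : y * t = s i * π α := by rw [← hαt, cs.simple_mul_simple_cancel_left]
  have hmem : t ∈ ris (i :: α) := by
    refine cs.mem_rightInvSeq_of_length_mul_lt ht ?_
    rwa [cs.wordProd_cons, ← hyt', mul_assoc, ht.mul_self, mul_one]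
  rcases List.mem_cons.1 hmem with htα | hmem
  · have : y = π α := by
      calc y = y * t * t := by rw [mul_assoc, ht.mul_self, mul_one]
        _ = π α := by rw [hyt', htα]; simp [mul_assoc]
    rw [hαt, ← this]
    exact .refl
  · have hinv := cs.isRightInversion_of_mem_rightInvSeq hα hmem
    have hsy : s i * y = π α * t := by
      rw [← hαt, mul_assoc, mul_assoc, ht.mul_self, mul_one]
    refine (bruhatLE_simple_mul hy).trans ?_
    rw [hαt]
    exact bruhatLE_of_eq_mul ht (by simp [hsy, mul_assoc, ht.mul_self]) (by rw [hsy]; exact hinv.2)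

theorem not_isLeftDescent_mul_of_ne {t : W} (ht : cs.IsReflection t) (hl : ℓ (y * t) = ℓ y + 1)
    (hy : ¬cs.IsLeftDescent y i) (hne : y * t ≠ s i * y) : ¬cs.IsLeftDescent (y * t) i := by
  intro hyt
  rw [cs.isLeftDescent_iff] at hyt
  have hy' := (bruhatLE_simple_mul_mul ht (by omega) hy).eq_of_length_le (by omega)
  exact hne <| calc y * t = s i * (s i * (y * t)) := (cs.simple_mul_simple_cancel_left i).symm
    _ = s i * y := by rw [← hy']

theorem bruhatLE.le_simple_mul (h : bruhatLE cs y z) (hz : cs.IsLeftDescent z i)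
    (hy : ¬cs.IsLeftDescent y i) : bruhatLE cs y (s i * z) := by
  induction h with
  | refl => exact absurd hz hy
  | @tail z₀ z h₀ step ih =>
    obtain ⟨t, ht, rfl, hl⟩ := step
    by_cases hz₀ : cs.IsLeftDescent z₀ i
    · refine (ih hz₀).trans (bruhatLE_of_eq_mul ht (mul_assoc _ _ _).symm ?_)
      rw [cs.isLeftDescent_iff] at hz hz₀
      omega
    · exact h₀.trans (bruhatLE_simple_mul_mul ht hl hz₀)

theorem bruhatLE.simple_mul_le_simple_mul {y z : W} (h : bruhatLE cs y z)
    (hz : ¬cs.IsLeftDescent z i) (hy : ¬cs.IsLeftDescent y i) :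
    bruhatLE cs (s i * y) (s i * z) := by
  rcases Relation.ReflTransGen.cases_tail h with rfl | ⟨z₀, h₀, t, ht, rfl, hl⟩
  · exact .refl
  replace h₀ : bruhatLE cs y z₀ := h₀
  by_cases hz₀ : cs.IsLeftDescent z₀ i
  · have h₁ : bruhatLE cs (s i * y) z₀ := by
      simpa using simple_mul_le_simple_mul (h₀.le_simple_mul hz₀ hy)
        (cs.isLeftDescent_iff_not_isLeftDescent_mul.1 hz₀) hy
    exact h₁.trans ((bruhatLE_of_eq_mul ht rfl hl).trans (bruhatLE_simple_mul hz))
  · refine (simple_mul_le_simple_mul h₀ hz₀ hy).trans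
      (bruhatLE_of_eq_mul ht (mul_assoc _ _ _).symm ?_)
    rw [cs.not_isLeftDescent_iff] at hz hz₀
    omega
termination_by cs.length z
decreasing_by
  · rw [cs.isLeftDescent_iff] at hz₀
    omega
  · omega

end BruhatOrder

section Parabolic

variable {cs} {J : Set B} {u v w x z : W} {i j : B}

theorem simple_mem_parabolicSubgroup (hj : j ∈ J) : s j ∈ parabolicSubgroup cs J :=
  Subgroup.subset_closure ⟨j, hj, rfl⟩

variable (cs J) in
theorem exists_isMinimalRep_mul (w : W) :
    ∃ v ∈ parabolicSubgroup cs J, isMinimalRep cs J (w * v) := by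
  classical
  have hex : ∃ n, ∃ v ∈ parabolicSubgroup cs J, ℓ (w * v) = n := ⟨_, 1, one_mem _, rfl⟩
  obtain ⟨v, hv, hvn⟩ := Nat.find_spec hex
  refine ⟨v, hv, fun v' hv' => ?_⟩
  rw [hvn, mul_assoc]
  exact Nat.find_min' hex ⟨v * v', mul_mem hv hv', rfl⟩

theorem isMinimalRep.simple_mul (hz : isMinimalRep cs J z) (hzi : cs.IsLeftDescent z i) :
    isMinimalRep cs J (s i * z) := by
  intro v hv
  have := hz v hv
  have := cs.length_simple_mul (z * v) i
  rw [cs.isLeftDescent_iff] at hzi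
  rw [mul_assoc]
  omega

theorem extPStep.mul_simple (h : extPStep cs J u w) (hj : j ∈ J) :
    extPStep cs J (u * s j) (w * s j) := by
  obtain ⟨t, ht, htJ, rfl, hl⟩ := h
  have ht' : cs.IsReflection (s j * t * s j) := by simpa using ht.conj (s j)
  have htj : s j * t * s j ≠ s j := by
    rw [Ne, cs.simple_mul_mul_simple_eq_iff, cs.simple_mul_simple_self, one_mul]
    rintro rfl
    exact htJ (simple_mem_parabolicSubgroup hj)
  have hsj := simple_mem_parabolicSubgroup (cs := cs) hj
  refine ⟨s j * t * s j, ht', ?_, by simp [mul_assoc], ?_⟩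
  · rwa [Subgroup.mul_mem_cancel_right _ hsj, Subgroup.mul_mem_cancel_left _ hsj]
  · rw [show u * t * s j = u * s j * (s j * t * s j) by simp [mul_assoc],
      ← cs.inversionParity_eq_zero_iff ht', cs.inversionParity_mul, cs.inversionParity_simple,
      if_neg htj, cs.inv_simple, show s j * (s j * t * s j) * s j = t by simp [mul_assoc],
      (cs.inversionParity_eq_zero_iff ht).2 hl, add_zero]

end Parabolic

section ExtendedOrder

variable {cs} {J : Set B} {u v w x z : W}

theorem extPStep.mul_parabolic (h : extPStep cs J u w) (hv : v ∈ parabolicSubgroup cs J) :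
    extPStep cs J (u * v) (w * v) := by
  induction hv using Subgroup.closure_induction_right with
  | one => simpa using h
  | mul_right v _ _ hj ih =>
    obtain ⟨j, hj, rfl⟩ := hj
    simpa [mul_assoc] using ih.mul_simple hj
  | mul_inv_cancel v _ _ hj ih =>
    obtain ⟨j, hj, rfl⟩ := hj
    simpa [mul_assoc] using ih.mul_simple hj

theorem extPLE.mul_parabolic (h : extPLE cs J u w) (hv : v ∈ parabolicSubgroup cs J) :
    extPLE cs J (u * v) (w * v) :=
  Relation.ReflTransGen.lift (· * v) (fun _ _ h => extPStep.mul_parabolic h hv) _ _ h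

theorem extPLE.bruhatLE (h : extPLE cs J u w) : bruhatLE cs u w :=
  Relation.ReflTransGen.mono (fun _ _ ⟨t, ht, _, hw, hl⟩ => ⟨t, ht, hw, hl⟩) _ _ h

theorem extPStep_simple_mul_of_isMinimalRep {i : B} (hz : isMinimalRep cs J z)
    (hzi : cs.IsLeftDescent z i) : extPStep cs J (s i * z) z := by
  refine ⟨z⁻¹ * s i * z, ⟨z⁻¹, i, by simp⟩, fun hmem => ?_, by simp [mul_assoc], hzi⟩
  have := hz _ hmem
  rw [show z * (z⁻¹ * s i * z) = s i * z by group] at this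
  exact absurd hzi (not_lt.2 this)

theorem exists_extPStep_bruhatLE_of_isMinimalRep {x z : W} (hz : isMinimalRep cs J z)
    (h : bruhatLE cs x z) (hne : x ≠ z) :
    ∃ y, extPStep cs J x y ∧ ℓ y = ℓ x + 1 ∧ bruhatLE cs y z := by
  have hz1 : z ≠ 1 := by
    rintro rfl
    simpa using h.length_lt_of_ne hne
  obtain ⟨i, hzi⟩ := cs.exists_leftDescent_of_ne_one hz1
  have hsz := simple_mul_bruhatLE hzi
  by_cases hxz : bruhatLE cs x (s i * z)
  · by_cases hxe : x = s i * z
    · subst hxe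
      refine ⟨z, extPStep_simple_mul_of_isMinimalRep hz hzi, ?_, .refl⟩
      rw [cs.isLeftDescent_iff] at hzi
      omega
    · obtain ⟨y, hxy, hl, hyz⟩ :=
        exists_extPStep_bruhatLE_of_isMinimalRep (hz.simple_mul hzi) hxz hxe
      exact ⟨y, hxy, hl, hyz.trans hsz⟩
  · -- `s` is a left descent of `x`, and a covering step `s x → s x t ≤ s z` lifts to `x → x t ≤ z`.
    have hxi : cs.IsLeftDescent x i := by_contra fun hxi => hxz (h.le_simple_mul hzi hxi)
    have hsxi := cs.isLeftDescent_iff_not_isLeftDescent_mul.1 hxi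
    have hsx : bruhatLE cs (s i * x) (s i * z) :=
      ((simple_mul_bruhatLE hxi).trans h).le_simple_mul hzi hsxi
    obtain ⟨y, ⟨t, ht, htJ, rfl, -⟩, hl, hyz⟩ :=
      exists_extPStep_bruhatLE_of_isMinimalRep (hz.simple_mul hzi) hsx
        (fun e => hne (mul_left_cancel e))
    have hy : ¬cs.IsLeftDescent (s i * x * t) i := by
      refine not_isLeftDescent_mul_of_ne ht hl hsxi fun e => hxz ?_
      rwa [e, cs.simple_mul_simple_cancel_left] at hyz
    have hxt : s i * (s i * x * t) = x * t := by simp [mul_assoc]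
    have hlen : ℓ (x * t) = ℓ x + 1 := by
      rw [cs.not_isLeftDescent_iff, hxt] at hy
      rw [cs.isLeftDescent_iff] at hxi
      omega
    refine ⟨x * t, ⟨t, ht, htJ, rfl, by omega⟩, hlen, ?_⟩
    simpa [hxt] using hyz.simple_mul_le_simple_mul
        (cs.isLeftDescent_iff_not_isLeftDescent_mul.1 hzi) hy
termination_by cs.length z
decreasing_by
  all_goals exact hzi

theorem extPLE_of_bruhatLE_of_isMinimalRep {x z : W} (hz : isMinimalRep cs J z)
    (h : bruhatLE cs x z) : extPLE cs J x z := by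
  by_cases hxz : x = z
  · exact hxz ▸ .refl
  obtain ⟨y, hxy, hl, hyz⟩ := exists_extPStep_bruhatLE_of_isMinimalRep hz h hxz
  exact .head hxy (extPLE_of_bruhatLE_of_isMinimalRep hz hyz)
termination_by cs.length z - cs.length x
decreasing_by
  have := hyz.length_le
  omega

end ExtendedOrder

end

theorem extPLE_tfae_general {M : CoxeterMatrix B}
    (cs : CoxeterSystem M W) (J : Set B) (u w : W) :
    (extPLE cs J u w ↔ ∀ v ∈ parabolicSubgroup cs J, extPLE cs J (u * v) (w * v)) ∧
    (extPLE cs J u w ↔ ∃ v ∈ parabolicSubgroup cs J,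
      isMinimalRep cs J (w * v) ∧ bruhatLE cs (u * v) (w * v)) := by
  refine ⟨⟨fun h v hv => h.mul_parabolic hv, fun h => by simpa using h 1 (one_mem _)⟩,
    ⟨fun h => ?_, fun ⟨v, hv, hmin, hle⟩ => ?_⟩⟩
  · obtain ⟨v, hv, hmin⟩ := exists_isMinimalRep_mul cs J w
    exact ⟨v, hv, hmin, (h.mul_parabolic hv).bruhatLE⟩
  · simpa [mul_assoc] using
      (extPLE_of_bruhatLE_of_isMinimalRep hmin hle).mul_parabolic (inv_mem hv)

theorem extPLE_tfae [Finite W] {M : CoxeterMatrix B}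
    (cs : CoxeterSystem M W) (J : Set B) (u w : W) :
    (extPLE cs J u w ↔ ∀ v ∈ parabolicSubgroup cs J, extPLE cs J (u * v) (w * v)) ∧
    (extPLE cs J u w ↔ ∃ v ∈ parabolicSubgroup cs J,
      isMinimalRep cs J (w * v) ∧ bruhatLE cs (u * v) (w * v)) :=
  extPLE_tfae_general cs J u w
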